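/- For all x > 0, 1/(2(x+1)) − 1/x ≤ ψ(x) − ln x ≤ −1/(2(x+1)). -/

import Mathlib

open Real Set Filter Topology

section aux

lemma aux_nonneg_of_antitoneOn_tendsto {f : ℝ → ℝ} (hf : AntitoneOn f (Ioi 0))
    (h0 : Tendsto f atTop (𝓝 0)) {t : ℝ} (ht : 0 < t) : 0 ≤ f t := by
  refine le_of_tendsto (f := f) h0 ?_
  filter_upwards [eventually_ge_atTop t] with s hs
  exact hf ht (lt_of_lt_of_le ht hs) hs

lemma aux_tendsto_log_succ_sub : Tendsto (fun t : ℝ => log (t + 1) - log t) atTop (𝓝 0) := by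
  have h1 : Tendsto (fun t : ℝ => 1 + t⁻¹) atTop (𝓝 (1 + 0)) :=
    tendsto_const_nhds.add tendsto_inv_atTop_zero
  rw [add_zero] at h1
  have h2 := (Real.continuousAt_log (by norm_num)).tendsto.comp h1
  rw [Real.log_one] at h2
  refine h2.congr' ?_
  filter_upwards [eventually_gt_atTop (0:ℝ)] with t ht
  rw [Function.comp_apply, show 1 + t⁻¹ = (t+1)/t by field_simp, log_div (by positivity) ht.ne']

lemma aux_inv_affine_tendsto (a b : ℝ) (ha : 0 < a) :
    Tendsto (fun t : ℝ => (a*(t+b))⁻¹) atTop (𝓝 0) := by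
  apply Tendsto.inv_tendsto_atTop
  exact (tendsto_atTop_add_const_right _ b tendsto_id).const_mul_atTop ha

lemma aux_inv_affine_tendsto_nat (a b : ℝ) (ha : 0 < a) :
    Tendsto (fun n : ℕ => (a*((n:ℝ)+b))⁻¹) atTop (𝓝 0) :=
  (aux_inv_affine_tendsto a b ha).comp tendsto_natCast_atTop_atTop

lemma aux_hasDerivAt_inv_affine (a b s : ℝ) (h : a*(s+b) ≠ 0) :
    HasDerivAt (fun t : ℝ => (a*(t+b))⁻¹) (-(a / (a*(s+b))^2)) s := by
  have h1 : HasDerivAt (fun t : ℝ => a*(t+b)) a s := by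
    simpa using (((hasDerivAt_id s).add_const b).const_mul a)
  have h2 := h1.inv h
  rw [neg_div] at h2
  exact h2

lemma aux_log_succ_sub_le {t : ℝ} (ht : 0 < t) :
    log (t + 1) - log t ≤ 1/t - (1/(2*t) - 1/(2*(t+1))) := by
  set c : ℝ → ℝ := fun t => (1*(t+0))⁻¹ - ((2*(t+0))⁻¹ - (2*(t+1))⁻¹) - (log (t+1) - log t)
    with hc
  have hD : ∀ s : ℝ, 0 < s → HasDerivAt c
      (-(1/(1*(s+0))^2) - (-(2/(2*(s+0))^2) - -(2/(2*(s+1))^2)) - ((s+1)⁻¹ - s⁻¹)) s := by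
    intro s hs
    have h1 := aux_hasDerivAt_inv_affine 1 0 s (by simp [hs.ne'])
    have h2 := aux_hasDerivAt_inv_affine 2 0 s (by positivity)
    have h3 := aux_hasDerivAt_inv_affine 2 1 s (by positivity)
    have h4 : HasDerivAt (fun t : ℝ => log (t+1)) (s+1)⁻¹ s := by
      simpa using ((hasDerivAt_id s).add_const 1).log (by positivity)
    have h5 : HasDerivAt log s⁻¹ s := Real.hasDerivAt_log hs.ne'
    exact (h1.sub (h2.sub h3)).sub (h4.sub h5)
  have key : 0 ≤ c t := by
    apply aux_nonneg_of_antitoneOn_tendsto _ _ ht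
    · apply antitoneOn_of_deriv_nonpos (convex_Ioi 0)
      · intro s hs
        exact (hD s hs).continuousAt.continuousWithinAt
      · rw [interior_Ioi]
        intro s hs
        exact (hD s hs).differentiableAt.differentiableWithinAt
      · rw [interior_Ioi]
        intro s hs
        rw [(hD s hs).deriv]
        have h1 : (0:ℝ) < s := hs
        have heq : -(1 / (1 * (s + 0)) ^ 2) - (-(2 / (2 * (s + 0)) ^ 2) - -(2 / (2 * (s + 1)) ^ 2)) -
            ((s+1)⁻¹ - s⁻¹) = -(1/(2*s^2*(s+1)^2)) := by
          field_simp
          ring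
        rw [heq]
        simp only [neg_nonpos]
        positivity
    · have h1 := aux_inv_affine_tendsto 1 0 one_pos
      have h2 := aux_inv_affine_tendsto 2 0 two_pos
      have h3 := aux_inv_affine_tendsto 2 1 two_pos
      have := ((h1.sub (h2.sub h3)).sub aux_tendsto_log_succ_sub)
      simpa [hc] using this
  have heq : c t = 1/t - (1/(2*t) - 1/(2*(t+1))) - (log (t+1) - log t) := by
    simp [hc, one_div]
  linarith [heq ▸ key]

lemma aux_le_log_succ_sub {t : ℝ} (ht : 0 < t) :
    1/(2*(t+1)) + 1/(t+1) - 1/(2*(t+2)) ≤ log (t + 1) - log t := by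
  set d : ℝ → ℝ := fun t => (log (t+1) - log t) - ((2*(t+1))⁻¹ + (1*(t+1))⁻¹ - (2*(t+2))⁻¹)
    with hd
  have hD : ∀ s : ℝ, 0 < s → HasDerivAt d
      (((s+1)⁻¹ - s⁻¹) - (-(2/(2*(s+1))^2) + -(1/(1*(s+1))^2) - -(2/(2*(s+2))^2))) s := by
    intro s hs
    have h1 := aux_hasDerivAt_inv_affine 2 1 s (by positivity)
    have h2 := aux_hasDerivAt_inv_affine 1 1 s (by positivity)
    have h3 := aux_hasDerivAt_inv_affine 2 2 s (by positivity)
    have h4 : HasDerivAt (fun t : ℝ => log (t+1)) (s+1)⁻¹ s := by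
      simpa using ((hasDerivAt_id s).add_const 1).log (by positivity)
    have h5 : HasDerivAt log s⁻¹ s := Real.hasDerivAt_log hs.ne'
    exact (h4.sub h5).sub ((h1.add h2).sub h3)
  have key : 0 ≤ d t := by
    apply aux_nonneg_of_antitoneOn_tendsto _ _ ht
    · apply antitoneOn_of_deriv_nonpos (convex_Ioi 0)
      · intro s hs
        exact (hD s hs).continuousAt.continuousWithinAt
      · rw [interior_Ioi]
        intro s hs
        exact (hD s hs).differentiableAt.differentiableWithinAt
      · rw [interior_Ioi]
        intro s hs
        rw [(hD s hs).deriv]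
        have h1 : (0:ℝ) < s := hs
        have heq : ((s+1)⁻¹ - s⁻¹) - (-(2/(2*(s+1))^2) + -(1/(1*(s+1))^2) - -(2/(2*(s+2))^2))
            = -((5*s+8)/(2*s*(s+1)^2*(s+2)^2)) := by
          field_simp
          ring
        rw [heq]
        simp only [neg_nonpos]
        positivity
    · have h1 := aux_inv_affine_tendsto 2 1 two_pos
      have h2 := aux_inv_affine_tendsto 1 1 one_pos
      have h3 := aux_inv_affine_tendsto 2 2 two_pos
      have := aux_tendsto_log_succ_sub.sub ((h1.add h2).sub h3)
      simpa [hd] using this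
  have heq : d t = (log (t+1) - log t) - (1/(2*(t+1)) + 1/(t+1) - 1/(2*(t+2))) := by
    simp [hd, one_div]
  linarith [heq ▸ key]

end aux

/-- The digamma function, the derivative of `log ∘ Γ`. -/
noncomputable def digamma : ℝ → ℝ := deriv (fun x => Real.log (Real.Gamma x))

section dig

lemma aux_Gdiff : ∀ y : ℝ, 0 < y → DifferentiableAt ℝ (fun x => Real.log (Real.Gamma x)) y := by
  intro y hy
  refine (Real.differentiableAt_Gamma ?_).log (Real.Gamma_ne_zero ?_) <;>
  · intro m
    exact ((show -(m:ℝ) < y by have := Nat.cast_nonneg (α := ℝ) m; linarith)).ne'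

lemma aux_rec : ∀ y : ℝ, 0 < y →
    Real.log (Real.Gamma (y+1)) = Real.log (Real.Gamma y) + Real.log y := by
  intro y hy
  rw [Real.Gamma_add_one hy.ne', Real.log_mul hy.ne' (Real.Gamma_pos_of_pos hy).ne', add_comm]

lemma digamma_rec {y : ℝ} (hy : 0 < y) : digamma (y + 1) = digamma y + 1/y := by
  unfold digamma
  rw [← deriv_comp_add_const, one_div, ← Real.deriv_log,
    ← deriv_add (aux_Gdiff y hy) (Real.differentiableAt_log hy.ne')]
  apply Filter.EventuallyEq.deriv_eq
  filter_upwards [eventually_gt_nhds hy] with s hs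
  exact aux_rec s hs

lemma digamma_le_log {y : ℝ} (hy : 0 < y) : digamma y ≤ Real.log y := by
  have hc : ConvexOn ℝ (Ioi 0) (fun x => Real.log (Real.Gamma x)) := Real.convexOn_log_Gamma
  have h := hc.deriv_le_slope (mem_Ioi.mpr hy) (mem_Ioi.mpr (by linarith : (0:ℝ) < y+1))
    (by linarith) (aux_Gdiff y hy)
  rwa [slope_def_field, show y+1-y = (1:ℝ) by ring, div_one, aux_rec y hy,
    add_sub_cancel_left] at h

lemma log_le_digamma_succ {y : ℝ} (hy : 0 < y) : Real.log y ≤ digamma (y + 1) := by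
  have hc : ConvexOn ℝ (Ioi 0) (fun x => Real.log (Real.Gamma x)) := Real.convexOn_log_Gamma
  have h := hc.slope_le_deriv (mem_Ioi.mpr hy) (mem_Ioi.mpr (by linarith : (0:ℝ) < y+1))
    (by linarith) (aux_Gdiff (y+1) (by linarith))
  rwa [slope_def_field, show y+1-y = (1:ℝ) by ring, div_one, aux_rec y hy,
    add_sub_cancel_left] at h

lemma digamma_telescope {x : ℝ} (hx : 0 < x) (n : ℕ) :
    digamma (x + n) = digamma x + ∑ k ∈ Finset.range n, 1/(x + k) := by
  induction n with
  | zero => simp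
  | succ n ih =>
    have h1 : x + ((n:ℝ) + 1) = (x + n) + 1 := by ring
    have h2 : (0:ℝ) < x + n := by positivity
    push_cast
    rw [h1, digamma_rec h2, ih, Finset.sum_range_succ]
    ring

lemma log_telescope {x : ℝ} (hx : 0 < x) (n : ℕ) :
    ∑ k ∈ Finset.range n, (Real.log (x + k + 1) - Real.log (x + k))
      = Real.log (x + n) - Real.log x := by
  have h := Finset.sum_range_sub (f := fun k : ℕ => Real.log (x + k)) n
  simp only [Nat.cast_add, Nat.cast_one, Nat.cast_zero, add_zero, ← add_assoc] at h
  simpa using h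

end dig

theorem digamma_sub_log_bounds (x : ℝ) (hx : 0 < x) :
    1 / (2 * (x + 1)) - 1 / x ≤ digamma x - Real.log x ∧
    digamma x - Real.log x ≤ -(1 / (2 * (x + 1))) := by
  constructor
  · -- lower bound
    have hn : ∀ n : ℕ, 1/(2*(x+1)) - 1/x - 1/(2*(x+(n:ℝ)+1)) ≤ digamma x - Real.log x := by
      intro n
      have htel := digamma_telescope hx (n+1)
      have hxn : (0:ℝ) < x + n := by positivity
      have hlb : Real.log (x + n) ≤ digamma (x + ((n:ℕ):ℝ) + 1) := log_le_digamma_succ hxn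
      have hcast : x + (((n:ℕ)+1 : ℕ):ℝ) = x + ((n:ℕ):ℝ) + 1 := by push_cast; ring
      rw [hcast, Finset.sum_range_succ] at htel
      -- per-term lower bound, with a k := 1/(x+k) - 1/(2*(x+k+1))
      have hsum : (fun k : ℕ => 1/(x+(k:ℝ)) - 1/(2*(x+(k:ℝ)+1))) 0
            - (fun k : ℕ => 1/(x+(k:ℝ)) - 1/(2*(x+(k:ℝ)+1))) n
          = ∑ k ∈ Finset.range n,
            ((fun k : ℕ => 1/(x+(k:ℝ)) - 1/(2*(x+(k:ℝ)+1))) k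
              - (fun k : ℕ => 1/(x+(k:ℝ)) - 1/(2*(x+(k:ℝ)+1))) (k+1)) :=
        (Finset.sum_range_sub' (f := fun k : ℕ => 1/(x+(k:ℝ)) - 1/(2*(x+(k:ℝ)+1))) n).symm
      have hterm : ∀ k ∈ Finset.range n,
          1/(x+(k:ℝ)) - (Real.log (x+k+1) - Real.log (x+k))
          ≤ ((fun k : ℕ => 1/(x+(k:ℝ)) - 1/(2*(x+(k:ℝ)+1))) k
              - (fun k : ℕ => 1/(x+(k:ℝ)) - 1/(2*(x+(k:ℝ)+1))) (k+1)) := by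
        intro k _
        have hk : (0:ℝ) < x + k := by positivity
        have h := aux_le_log_succ_sub hk
        simp only []
        push_cast
        ring_nf
        ring_nf at h
        linarith
      have hsum2 := Finset.sum_le_sum hterm
      rw [← hsum] at hsum2
      have hlogtel := log_telescope hx n
      have hsplit : ∑ k ∈ Finset.range n, (1/(x+(k:ℝ)) - (Real.log (x+k+1) - Real.log (x+k)))
          = (∑ k ∈ Finset.range n, 1/(x+(k:ℝ)))
            - (Real.log (x + n) - Real.log x) := by
        rw [Finset.sum_sub_distrib, hlogtel]
      rw [hsplit] at hsum2
      push_cast at hsum2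
      ring_nf at hsum2 htel ⊢
      rw [show x + (n:ℝ) + 1 = 1 + x + n by ring] at hlb
      linarith [hlb, htel, hsum2]
    have hlim : Tendsto (fun n : ℕ => 1/(2*(x+1)) - 1/x - 1/(2*(x+(n:ℝ)+1))) atTop
        (𝓝 (1/(2*(x+1)) - 1/x - 0)) := by
      apply Tendsto.sub tendsto_const_nhds
      have := aux_inv_affine_tendsto_nat 2 (x+1) two_pos
      simp only [one_div]
      refine this.congr fun n => ?_
      ring_nf
    rw [sub_zero] at hlim
    exact le_of_tendsto hlim (Eventually.of_forall hn)
  · -- upper bound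
    have hn : ∀ n : ℕ, digamma x - Real.log x ≤ 1/(2*(x+(n:ℝ))) - 1/(2*x) := by
      intro n
      have htel := digamma_telescope hx n
      have hxn : (0:ℝ) < x + n := by positivity
      have hub : digamma (x + n) ≤ Real.log (x + n) := digamma_le_log hxn
      have hsum : (fun k : ℕ => 1/(2*(x+(k:ℝ)))) 0 - (fun k : ℕ => 1/(2*(x+(k:ℝ)))) n
          = ∑ k ∈ Finset.range n,
            ((fun k : ℕ => 1/(2*(x+(k:ℝ)))) k - (fun k : ℕ => 1/(2*(x+(k:ℝ)))) (k+1)) :=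
        (Finset.sum_range_sub' (f := fun k : ℕ => 1/(2*(x+(k:ℝ)))) n).symm
      have hterm : ∀ k ∈ Finset.range n,
          (Real.log (x+k+1) - Real.log (x+k)) - 1/(x+(k:ℝ))
          ≤ -((fun k : ℕ => 1/(2*(x+(k:ℝ)))) k - (fun k : ℕ => 1/(2*(x+(k:ℝ)))) (k+1)) := by
        intro k _
        have hk : (0:ℝ) < x + k := by positivity
        have h := aux_log_succ_sub_le hk
        simp only []
        push_cast
        ring_nf
        ring_nf at h
        linarith
      have hsum2 := Finset.sum_le_sum hterm
      rw [Finset.sum_neg_distrib, ← hsum] at hsum2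
      have hlogtel := log_telescope hx n
      have hsplit : ∑ k ∈ Finset.range n, ((Real.log (x+k+1) - Real.log (x+k)) - 1/(x+(k:ℝ)))
          = (Real.log (x + n) - Real.log x) - ∑ k ∈ Finset.range n, 1/(x+(k:ℝ)) := by
        rw [Finset.sum_sub_distrib, hlogtel]
      rw [hsplit] at hsum2
      push_cast at hsum2
      ring_nf at hsum2 htel ⊢
      linarith [hub, htel, hsum2]
    have hlim : Tendsto (fun n : ℕ => 1/(2*(x+(n:ℝ))) - 1/(2*x)) atTop (𝓝 (0 - 1/(2*x))) := by
      apply Tendsto.sub _ tendsto_const_nhds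
      have := aux_inv_affine_tendsto_nat 2 x two_pos
      simp only [one_div]
      refine this.congr fun n => ?_
      ring_nf
    rw [zero_sub] at hlim
    have h1 := ge_of_tendsto hlim (Eventually.of_forall hn)
    have h2 : 1/(2*(x+1)) ≤ 1/(2*x) :=
      one_div_le_one_div_of_le (by positivity) (by linarith)
    linarith
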